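/- For Cauchy densities with common location l, the KL divergence KL(p_{l,s₁} : p_{l,s₂}) equals 2·ln((s₁+s₂)/(2√(s₁s₂))). -/

import Mathlib

open MeasureTheory Real

noncomputable def cauchyPdf (l s x : ℝ) : ℝ := s / (π * (s ^ 2 + (x - l) ^ 2))

/-!
For fixed `s`, differentiate `t ↦ KL(p_{l,s} : p_{l,t})` under the integral sign: since
`∂ₜ log p_{l,t} = 1/t - 2π p_{l,t}`, the derivative is `2π ∫ p_{l,s} p_{l,t} - 1/t`, and a partial
fraction decomposition gives `∫ p_{l,s} p_{l,t} = 1/(π(s+t))` for `t ≠ s`. So the divergence and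
`2 log (s + t) - log t` have the same derivative off `t = s`, and comparing them at `t = s`, where
the divergence vanishes, gives the closed form.
-/

open ProbabilityTheory Set

section

variable {l s t : ℝ}

lemma cauchyPdf_eq_cauchyPDFReal (hs : 0 ≤ s) : cauchyPdf l s = cauchyPDFReal l s.toNNReal := by
  ext x
  rw [cauchyPdf, cauchyPDFReal_def, Real.coe_toNNReal s hs]
  field_simp
  ring

lemma cauchyPdf_pos (hs : 0 < s) (x : ℝ) : 0 < cauchyPdf l s x := by
  unfold cauchyPdf; positivity

lemma cauchyPdf_le (hs : 0 < s) (x : ℝ) : cauchyPdf l s x ≤ 1 / (π * s) := by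
  unfold cauchyPdf
  rw [div_le_div_iff₀ (by positivity) (by positivity)]
  nlinarith [pi_pos, sq_nonneg (x - l), mul_pos pi_pos hs]

lemma integrable_cauchyPdf (hs : 0 ≤ s) : Integrable (cauchyPdf l s) := by
  rw [cauchyPdf_eq_cauchyPDFReal hs]
  exact integrable_cauchyPDFReal l

lemma integral_cauchyPdf (hs : 0 < s) : ∫ x, cauchyPdf l s x = 1 := by
  rw [cauchyPdf_eq_cauchyPDFReal hs.le]
  exact integral_cauchyPDFReal_eq_one l (by simpa using hs)

lemma measurable_cauchyPdf : Measurable (cauchyPdf l s) := by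
  unfold cauchyPdf; fun_prop

lemma integrable_cauchyPdf_mul_cauchyPdf (hs : 0 ≤ s) (ht : 0 < t) :
    Integrable fun x => cauchyPdf l s x * cauchyPdf l t x :=
  (integrable_cauchyPdf hs).mul_bdd measurable_cauchyPdf.aestronglyMeasurable
    (Filter.Eventually.of_forall fun x => by
      rw [norm_of_nonneg (cauchyPdf_pos ht x).le]; exact cauchyPdf_le ht x)

lemma cauchyPdf_mul_cauchyPdf (hs : 0 < s) (ht : 0 < t) (hst : s ≠ t) (x : ℝ) :
    cauchyPdf l s x * cauchyPdf l t x =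
      (t * cauchyPdf l s x - s * cauchyPdf l t x) / (π * (t + s) * (t - s)) := by
  have hts : t - s ≠ 0 := sub_ne_zero.mpr hst.symm
  unfold cauchyPdf
  field_simp
  ring

lemma integral_cauchyPdf_mul_cauchyPdf (hs : 0 < s) (ht : 0 < t) (hst : s ≠ t) :
    ∫ x, cauchyPdf l s x * cauchyPdf l t x = 1 / (π * (s + t)) := by
  have hts : t - s ≠ 0 := sub_ne_zero.mpr hst.symm
  simp_rw [cauchyPdf_mul_cauchyPdf hs ht hst]
  rw [integral_div, integral_sub ((integrable_cauchyPdf hs.le).const_mul t)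
    ((integrable_cauchyPdf ht.le).const_mul s), integral_const_mul, integral_const_mul,
    integral_cauchyPdf hs, integral_cauchyPdf ht]
  field_simp
  ring

lemma cauchyPdf_div_mem_uIcc (hs : 0 < s) (ht : 0 < t) (x : ℝ) :
    cauchyPdf l s x / cauchyPdf l t x ∈ uIcc (s / t) (t / s) := by
  have hd : cauchyPdf l s x / cauchyPdf l t x =
      s * (t ^ 2 + (x - l) ^ 2) / (t * (s ^ 2 + (x - l) ^ 2)) := by
    unfold cauchyPdf
    field_simp
  rw [hd]
  have hst := mul_pos hs ht
  have hx := sq_nonneg (x - l)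
  rcases le_total s t with h | h
  · have hsq : s ^ 2 ≤ t ^ 2 := pow_le_pow_left₀ hs.le h 2
    refine Icc_subset_uIcc ⟨?_, ?_⟩
    · rw [div_le_div_iff₀ ht (by positivity)]; nlinarith
    · rw [div_le_div_iff₀ (by positivity) hs]; nlinarith
  · have hsq : t ^ 2 ≤ s ^ 2 := pow_le_pow_left₀ ht.le h 2
    refine Icc_subset_uIcc' ⟨?_, ?_⟩
    · rw [div_le_div_iff₀ hs (by positivity)]; nlinarith
    · rw [div_le_div_iff₀ (by positivity) ht]; nlinarith

lemma abs_log_cauchyPdf_div_le (hs : 0 < s) (ht : 0 < t) (x : ℝ) :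
    |log (cauchyPdf l s x / cauchyPdf l t x)| ≤ |log (s / t)| := by
  have hpos : 0 < cauchyPdf l s x / cauchyPdf l t x :=
    div_pos (cauchyPdf_pos hs x) (cauchyPdf_pos ht x)
  have hinv : log (t / s) = -log (s / t) := by rw [← log_inv, inv_div]
  rw [abs_le]
  rcases mem_uIcc.mp (cauchyPdf_div_mem_uIcc (l := l) hs ht x) with ⟨h₁, h₂⟩ | ⟨h₁, h₂⟩ <;>
  · have := log_le_log (by positivity) h₁
    have := log_le_log hpos h₂
    constructor <;> linarith [neg_abs_le (log (s / t)), le_abs_self (log (s / t))]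

lemma hasDerivAt_log_cauchyPdf_scale (ht : 0 < t) (x : ℝ) :
    HasDerivAt (fun t => log (cauchyPdf l t x)) (1 / t - 2 * π * cauchyPdf l t x) t := by
  have hden : HasDerivAt (fun t => π * (t ^ 2 + (x - l) ^ 2)) (π * (2 * t)) t := by
    simpa using ((hasDerivAt_pow 2 t).add_const ((x - l) ^ 2)).const_mul π
  refine (((hasDerivAt_id' t).div hden (by positivity)).log (cauchyPdf_pos ht x).ne').congr_deriv ?_
  simp only [Pi.div_apply, cauchyPdf]
  field_simp

lemma abs_two_pi_mul_cauchyPdf_sub_le (ht : 0 < t) (x : ℝ) :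
    |2 * π * cauchyPdf l t x - 1 / t| ≤ 1 / t := by
  have hle : 2 * π * cauchyPdf l t x ≤ 2 * π * (1 / (π * t)) := by
    gcongr; exact cauchyPdf_le ht x
  have hpos : 0 < 2 * π * cauchyPdf l t x := by have := cauchyPdf_pos (l := l) ht x; positivity
  rw [abs_le]
  constructor
  · linarith
  · have : 2 * π * (1 / (π * t)) = 1 / t + 1 / t := by field_simp; ring
    linarith

noncomputable def cauchyKL (l s t : ℝ) : ℝ :=
  ∫ x, cauchyPdf l s x * log (cauchyPdf l s x / cauchyPdf l t x)

lemma cauchyKL_self : cauchyKL l s s = 0 := by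
  simp [cauchyKL]

lemma hasDerivAt_cauchyKL (hs : 0 < s) (ht : 0 < t) :
    HasDerivAt (cauchyKL l s) (∫ x, cauchyPdf l s x * (2 * π * cauchyPdf l t x - 1 / t)) t := by
  have hnhds : Ioi (t / 2) ∈ nhds t := Ioi_mem_nhds (half_lt_self ht)
  refine (hasDerivAt_integral_of_dominated_loc_of_deriv_le
    (F := fun t x => cauchyPdf l s x * log (cauchyPdf l s x / cauchyPdf l t x))
    (F' := fun t x => cauchyPdf l s x * (2 * π * cauchyPdf l t x - 1 / t))
    (bound := fun x => cauchyPdf l s x * (2 / t))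
    hnhds ?meas ?int ?meas' ?bound ((integrable_cauchyPdf hs.le).mul_const _) ?deriv).2
  case meas =>
    exact Filter.Eventually.of_forall fun _ => (measurable_cauchyPdf.mul
      (measurable_cauchyPdf.div measurable_cauchyPdf).log).aestronglyMeasurable
  case int =>
    exact (integrable_cauchyPdf hs.le).mul_bdd
      (measurable_cauchyPdf.div measurable_cauchyPdf).log.aestronglyMeasurable
      (Filter.Eventually.of_forall fun x => abs_log_cauchyPdf_div_le hs ht x)
  case meas' =>
    exact (measurable_cauchyPdf.mul
      ((measurable_cauchyPdf.const_mul _).sub measurable_const)).aestronglyMeasurable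
  case bound =>
    refine Filter.Eventually.of_forall fun x t' ht' => ?_
    have ht'pos : 0 < t' := (half_pos ht).trans ht'
    rw [norm_mul, norm_of_nonneg (cauchyPdf_pos hs x).le]
    refine mul_le_mul_of_nonneg_left ?_ (cauchyPdf_pos hs x).le
    calc ‖2 * π * cauchyPdf l t' x - 1 / t'‖
        ≤ 1 / t' := abs_two_pi_mul_cauchyPdf_sub_le ht'pos x
      _ ≤ 2 / t := by rw [div_le_div_iff₀ ht'pos ht]; linarith [mem_Ioi.mp ht']
  case deriv =>
    refine Filter.Eventually.of_forall fun x t' ht' => ?_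
    have ht'pos : 0 < t' := (half_pos ht).trans ht'
    have hlog := ((hasDerivAt_log_cauchyPdf_scale (l := l) ht'pos x).const_sub
      (log (cauchyPdf l s x))).const_mul (cauchyPdf l s x)
    refine (hlog.congr_of_eventuallyEq ?_).congr_deriv (by ring)
    filter_upwards [Ioi_mem_nhds ht'pos] with τ hτ
    rw [log_div (cauchyPdf_pos hs x).ne' (cauchyPdf_pos hτ x).ne']

lemma hasDerivAt_cauchyKL_of_ne (hs : 0 < s) (ht : 0 < t) (hst : s ≠ t) :
    HasDerivAt (cauchyKL l s) (2 / (s + t) - 1 / t) t := by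
  refine (hasDerivAt_cauchyKL hs ht).congr_deriv ?_
  simp_rw [mul_sub, mul_left_comm (cauchyPdf l s _)]
  rw [integral_sub ((integrable_cauchyPdf_mul_cauchyPdf hs.le ht).const_mul _)
    ((integrable_cauchyPdf hs.le).mul_const _), integral_mul_const, integral_const_mul,
    integral_cauchyPdf hs, integral_cauchyPdf_mul_cauchyPdf hs ht hst]
  field_simp

lemma hasDerivAt_two_log_add_sub_log (hs : 0 < s) (ht : 0 < t) :
    HasDerivAt (fun τ => 2 * log (s + τ) - log τ) (2 / (s + t) - 1 / t) t := by
  have h₁ := (((hasDerivAt_id' t).const_add s).log (by positivity)).const_mul 2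
  have h₂ := hasDerivAt_log ht.ne'
  exact (h₁.sub h₂).congr_deriv (by ring)

lemma cauchyKL_eq (hs : 0 < s) (ht : 0 < t) :
    cauchyKL l s t = 2 * log (s + t) - log s - log t - 2 * log 2 := by
  set φ : ℝ → ℝ := fun τ => cauchyKL l s τ - (2 * log (s + τ) - log τ)
  have hpos : ∀ τ ∈ uIcc s t, 0 < τ := fun τ hτ => (lt_min hs ht).trans_le hτ.1
  have hφ : ∫ _ in s..t, (0 : ℝ) = φ t - φ s := by
    refine integral_eq_of_hasDerivAt_off_countable φ 0 (countable_singleton s) ?_ ?_ ?_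
    · exact fun τ hτ => ((hasDerivAt_cauchyKL hs (hpos τ hτ)).continuousAt.sub
        (hasDerivAt_two_log_add_sub_log hs (hpos τ hτ)).continuousAt).continuousWithinAt
    · rintro τ ⟨hτ, hτs⟩
      have hτ₀ : 0 < τ := hpos τ (Ioo_subset_Icc_self hτ)
      exact ((hasDerivAt_cauchyKL_of_ne hs hτ₀ (Ne.symm hτs)).sub
        (hasDerivAt_two_log_add_sub_log hs hτ₀)).congr_deriv (sub_self _)
    · exact intervalIntegrable_const
  have h2s : log (2 * s) = log 2 + log s := log_mul two_ne_zero hs.ne'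
  simp only [φ, intervalIntegral.integral_zero, cauchyKL_self, ← two_mul, h2s] at hφ
  linarith

end

theorem stmt_8 (l s₁ s₂ : ℝ) (hs₁ : 0 < s₁) (hs₂ : 0 < s₂) :
    ∫ x : ℝ, cauchyPdf l s₁ x * Real.log (cauchyPdf l s₁ x / cauchyPdf l s₂ x) =
      2 * Real.log ((s₁ + s₂) / (2 * Real.sqrt (s₁ * s₂))) := by
  change cauchyKL l s₁ s₂ = _
  rw [cauchyKL_eq hs₁ hs₂, log_div (by positivity) (by positivity),
    log_mul two_ne_zero (by positivity), log_sqrt (by positivity), log_mul hs₁.ne' hs₂.ne']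
  ring
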